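/- Let n ≥ 1, 1/2 < γ < 1, 0 ≤ p₁ ≤ … ≤ p_n, and set α_i = (1+p_i/2)/(1+γp_i/2) and k_i = (2−γ)p_i/2. Let C₀ > n, let a ∈ ℝⁿ with a ≠ 0, define I = { i : (1/α_i)|a_i|^{2α_i} ≥ |a|_α²/C₀ } and w = Σ_{i∈I} (sgn(a_i)/α_i) (|a|_α^{k_i−1} / |a_i|^{α_i(k_i−1)}) e_i. Then wᵀw = Σ_{i∈I} (1/α_i²) |a|_α^{2(k_i−1)} / |a_i|^{2α_i(k_i−1)} ≤ C · max(C₀^{k_n−1}, 1) for a constant C depending only on n, γ and p_n. -/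
import Mathlib


noncomputable section
open Real Finset

/-- The anisotropic distance `|z|_α = ( Σ_i (1/α_i)|z_i|^{2α_i} )^{1/2}`. -/
def anorm {n : ℕ} (α : Fin n → ℝ) (z : EuclideanSpace ℝ (Fin n)) : ℝ :=
  Real.sqrt (∑ i, (1 / α i) * |z i| ^ (2 * α i))

/-- `α = (1+p/2)/(1+γp/2)`. -/
def αe (γ p : ℝ) : ℝ := (1 + p / 2) / (1 + γ * p / 2)

/-- `k = (2−γ)p/2`. -/
def ke (γ p : ℝ) : ℝ := (2 - γ) * p / 2

lemma αe_ge_one {γ p : ℝ} (hγ0 : 1 / 2 < γ) (hγ1 : γ < 1) (hp : 0 ≤ p) : 1 ≤ αe γ p := by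
  have hd : 0 < 1 + γ * p / 2 := by nlinarith
  rw [αe, le_div_iff₀ hd]
  nlinarith

lemma αe_le_two {γ p : ℝ} (hγ0 : 1 / 2 < γ) (hγ1 : γ < 1) (hp : 0 ≤ p) : αe γ p ≤ 2 := by
  have hd : 0 < 1 + γ * p / 2 := by nlinarith
  rw [αe, div_le_iff₀ hd]
  nlinarith

lemma ke_nonneg {γ p : ℝ} (hγ1 : γ < 1) (hp : 0 ≤ p) : 0 ≤ ke γ p := by
  rw [ke]; nlinarith

lemma ke_mono {γ p q : ℝ} (hγ1 : γ < 1) (hpq : p ≤ q) : ke γ p ≤ ke γ q := by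
  rw [ke, ke]; nlinarith

/-- **Bound on `wᵀw`.** With `α_i = (1+p_i/2)/(1+γp_i/2)` and `k_i = (2−γ)p_i/2`, for any
`C₀ > n`, `a ≠ 0`, `I = {i : (1/α_i)|a_i|^{2α_i} ≥ |a|_α²/C₀}` and
`w = Σ_{i∈I} (sgn(a_i)/α_i)(|a|_α^{k_i−1}/|a_i|^{α_i(k_i−1)}) e_i`, one has
`wᵀw = Σ_{i∈I} (1/α_i²)|a|_α^{2(k_i−1)}/|a_i|^{2α_i(k_i−1)} ≤ C·max(C₀^{k_n−1},1)`,
for a constant `C` depending only on `n, γ, p_n`. -/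
theorem wtw_bound (n : ℕ) (hn : 1 ≤ n) (γ pn : ℝ) (hγ0 : 1 / 2 < γ) (hγ1 : γ < 1) :
    ∃ C > (0 : ℝ),
      ∀ p : Fin n → ℝ, (∀ i, 0 ≤ p i) → Monotone p → p ⟨n - 1, by omega⟩ = pn →
      ∀ C₀ : ℝ, (n : ℝ) < C₀ →
      ∀ a : EuclideanSpace ℝ (Fin n), a ≠ 0 →
      ∀ (I : Finset (Fin n)) (w : Fin n → ℝ),
        (∀ i, i ∈ I ↔ (anorm (fun i => αe γ (p i)) a) ^ 2 / C₀ ≤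
            (1 / αe γ (p i)) * |a i| ^ (2 * αe γ (p i))) →
        (∀ i, w i = if i ∈ I then
            (Real.sign (a i) / αe γ (p i)) *
              ((anorm (fun i => αe γ (p i)) a) ^ (ke γ (p i) - 1) /
                |a i| ^ (αe γ (p i) * (ke γ (p i) - 1)))
          else 0) →
        (∑ i, w i * w i) =
          (∑ i ∈ I, (1 / αe γ (p i) ^ 2) *
            ((anorm (fun i => αe γ (p i)) a) ^ (2 * (ke γ (p i) - 1)) /
              |a i| ^ (2 * αe γ (p i) * (ke γ (p i) - 1)))) ∧
        (∑ i, w i * w i) ≤ C * max (C₀ ^ (ke γ pn - 1)) 1 := by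
  refine ⟨2 * n, by positivity, ?_⟩
  intro p hp hmono hpn C₀ hC₀ a ha I w hI hw
  set A := anorm (fun i => αe γ (p i)) a with hAdef
  have hα1 : ∀ i, 1 ≤ αe γ (p i) := fun i => αe_ge_one hγ0 hγ1 (hp i)
  have hα2 : ∀ i, αe γ (p i) ≤ 2 := fun i => αe_le_two hγ0 hγ1 (hp i)
  have hαpos : ∀ i, 0 < αe γ (p i) := fun i => lt_of_lt_of_le one_pos (hα1 i)
  have hterm_nonneg : ∀ i, (0:ℝ) ≤ (1 / αe γ (p i)) * |a i| ^ (2 * αe γ (p i)) := by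
    intro i
    exact mul_nonneg (one_div_nonneg.mpr (hαpos i).le)
      (Real.rpow_nonneg (abs_nonneg (a i)) _)
  have hC₀1 : (1:ℝ) ≤ C₀ := by
    have : (1:ℝ) ≤ (n:ℝ) := by exact_mod_cast hn
    linarith
  have hC₀pos : (0:ℝ) < C₀ := by linarith
  -- A² equals the sum
  have hA2 : A ^ 2 = ∑ i, (1 / αe γ (p i)) * |a i| ^ (2 * αe γ (p i)) := by
    rw [hAdef, anorm, Real.sq_sqrt (Finset.sum_nonneg fun i _ => hterm_nonneg i)]
  -- A > 0
  have hApos : 0 < A := by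
    obtain ⟨j, hj⟩ : ∃ j, a j ≠ 0 := by
      by_contra h
      push_neg at h
      exact ha (by ext j; exact h j)
    rw [hAdef, anorm]
    apply Real.sqrt_pos.mpr
    apply Finset.sum_pos' (fun i _ => hterm_nonneg i) ⟨j, Finset.mem_univ j, ?_⟩
    have hbj : 0 < |a j| := abs_pos.mpr hj
    exact mul_pos (one_div_pos.mpr (hαpos j)) (Real.rpow_pos_of_pos hbj _)
  have haI : ∀ i ∈ I, a i ≠ 0 := by
    intro i hi h0
    have hmem := (hI i).mp hi
    rw [h0] at hmem
    have h2α : 2 * αe γ (p i) ≠ 0 := by have := hαpos i; positivity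
    rw [abs_zero, Real.zero_rpow h2α, mul_zero] at hmem
    have : 0 < A ^ 2 / C₀ := div_pos (pow_pos hApos 2) hC₀pos
    linarith
  -- signs square to one
  have hsgn : ∀ i ∈ I, Real.sign (a i) * Real.sign (a i) = 1 := by
    intro i hi
    rcases lt_trichotomy (a i) 0 with h | h | h
    · rw [Real.sign_of_neg h]; norm_num
    · exact absurd h (haI i hi)
    · rw [Real.sign_of_pos h]; norm_num
  -- the equality
  have heq : (∑ i, w i * w i) =
      (∑ i ∈ I, (1 / αe γ (p i) ^ 2) *
        (A ^ (2 * (ke γ (p i) - 1)) / |a i| ^ (2 * αe γ (p i) * (ke γ (p i) - 1)))) := by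
    rw [← Finset.sum_subset (Finset.subset_univ I)
      (fun x _ hx => by rw [hw x, if_neg hx, mul_zero])]
    refine Finset.sum_congr rfl fun i hi => ?_
    have hb : 0 < |a i| := abs_pos.mpr (haI i hi)
    have h1 : A ^ (ke γ (p i) - 1) * A ^ (ke γ (p i) - 1) = A ^ (2 * (ke γ (p i) - 1)) := by
      rw [← Real.rpow_add hApos]; congr 1; ring
    have h2 : |a i| ^ (αe γ (p i) * (ke γ (p i) - 1)) *
        |a i| ^ (αe γ (p i) * (ke γ (p i) - 1)) =
        |a i| ^ (2 * αe γ (p i) * (ke γ (p i) - 1)) := by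
      rw [← Real.rpow_add hb]; congr 1; ring
    rw [hw i, if_pos hi,
      show ∀ s c X Y : ℝ, (s / c * (X / Y)) * (s / c * (X / Y))
        = (s * s) * ((1 / c ^ 2) * ((X * X) / (Y * Y))) from fun s c X Y => by ring,
      hsgn i hi, one_mul, h1, h2]
  refine ⟨heq, ?_⟩
  rw [heq]
  have hmax1 : (1:ℝ) ≤ max (C₀ ^ (ke γ pn - 1)) 1 := le_max_right _ _
  -- per-term bound
  have hbnd : ∀ i ∈ I, (1 / αe γ (p i) ^ 2) *
      (A ^ (2 * (ke γ (p i) - 1)) / |a i| ^ (2 * αe γ (p i) * (ke γ (p i) - 1)))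
      ≤ 2 * max (C₀ ^ (ke γ pn - 1)) 1 := by
    intro i hi
    set α := αe γ (p i) with hα
    set e := ke γ (p i) - 1 with he
    have hb : 0 < |a i| := abs_pos.mpr (haI i hi)
    have hmem := (hI i).mp hi
    -- upper and lower bounds on |a i|^(2α)
    have hub : |a i| ^ (2 * α) ≤ 2 * A ^ 2 := by
      have hle : (1 / α) * |a i| ^ (2 * α) ≤ A ^ 2 := by
        rw [hA2]
        exact Finset.single_le_sum (fun j _ => hterm_nonneg j) (Finset.mem_univ i)
      have hαp := hαpos i
      rw [one_div, inv_mul_le_iff₀ hαp] at hle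
      calc |a i| ^ (2 * α) ≤ α * A ^ 2 := hle
        _ ≤ 2 * A ^ 2 := by nlinarith [sq_nonneg A, hα2 i]
    have hlb : A ^ 2 / C₀ ≤ |a i| ^ (2 * α) := by
      calc A ^ 2 / C₀ ≤ (1 / α) * |a i| ^ (2 * α) := hmem
        _ ≤ 1 * |a i| ^ (2 * α) := by
            apply mul_le_mul_of_nonneg_right _ (Real.rpow_nonneg hb.le _)
            rw [div_le_one (hαpos i)]; exact hα1 i
        _ = |a i| ^ (2 * α) := one_mul _
    have hYpos : 0 < |a i| ^ (2 * α * e) := Real.rpow_pos_of_pos hb _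
    have hbpow : |a i| ^ (2 * α * e) = (|a i| ^ (2 * α)) ^ e := by
      rw [← Real.rpow_mul hb.le]
    have hApow : A ^ (2 * e) = (A ^ 2) ^ e := by
      rw [show (2:ℝ) * e = (2:ℝ) * e from rfl, Real.rpow_mul hApos.le, Real.rpow_two]
    have hXY : A ^ (2 * e) / |a i| ^ (2 * α * e) ≤ 2 * max (C₀ ^ (ke γ pn - 1)) 1 := by
      rcases le_or_gt 0 e with hepos | heneg
      · -- e ≥ 0 case
        have h1 : (A ^ 2 / C₀) ^ e ≤ (|a i| ^ (2 * α)) ^ e :=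
          Real.rpow_le_rpow (by positivity) hlb hepos
        have h2 : (A ^ 2 / C₀) ^ e = (A ^ 2) ^ e / C₀ ^ e :=
          Real.div_rpow (sq_nonneg A) hC₀pos.le e
        have hC₀epos : 0 < C₀ ^ e := Real.rpow_pos_of_pos hC₀pos e
        rw [hbpow] at hYpos
        rw [hApow, hbpow, div_le_iff₀ hYpos]
        · calc (A ^ 2) ^ e = (A ^ 2 / C₀) ^ e * C₀ ^ e := by
                rw [h2, div_mul_cancel₀ _ (ne_of_gt hC₀epos)]
            _ ≤ (|a i| ^ (2 * α)) ^ e * C₀ ^ e :=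
                mul_le_mul_of_nonneg_right h1 hC₀epos.le
            _ ≤ 2 * max (C₀ ^ (ke γ pn - 1)) 1 * (|a i| ^ (2 * α)) ^ e := by
                rw [mul_comm]
                apply mul_le_mul_of_nonneg_right _ (Real.rpow_nonneg (by positivity) e)
                have hkle : e ≤ ke γ pn - 1 := by
                  rw [he, ← hpn]
                  have : p i ≤ p ⟨n - 1, by omega⟩ := by
                    apply hmono
                    rw [Fin.le_def]
                    show (i : ℕ) ≤ n - 1
                    have := i.isLt
                    omega
                  linarith [ke_mono hγ1 this]
                calc C₀ ^ e ≤ C₀ ^ (ke γ pn - 1) :=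
                      Real.rpow_le_rpow_of_exponent_le hC₀1 hkle
                  _ ≤ max (C₀ ^ (ke γ pn - 1)) 1 := le_max_left _ _
                  _ ≤ 2 * max (C₀ ^ (ke γ pn - 1)) 1 := by linarith
      · -- e < 0 case
        have h2A2 : (0:ℝ) < 2 * A ^ 2 := by positivity
        have h1 : (2 * A ^ 2) ^ e ≤ (|a i| ^ (2 * α)) ^ e := by
          exact Real.rpow_le_rpow_of_nonpos (by
            calc (0:ℝ) < A ^ 2 / C₀ := by positivity
              _ ≤ |a i| ^ (2 * α) := hlb) hub heneg.le
        have h2 : (2 * A ^ 2) ^ e = 2 ^ e * (A ^ 2) ^ e :=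
          Real.mul_rpow (by norm_num) (sq_nonneg A)
        have h2epos : (0:ℝ) < 2 ^ e := Real.rpow_pos_of_pos (by norm_num) e
        have h2negpos : (0:ℝ) < 2 ^ (-e) := Real.rpow_pos_of_pos (by norm_num) (-e)
        rw [hbpow] at hYpos
        rw [hApow, hbpow, div_le_iff₀ hYpos]
        have hle2 : (2:ℝ) ^ (-e) ≤ 2 := by
          calc (2:ℝ) ^ (-e) ≤ 2 ^ (1:ℝ) := by
                apply Real.rpow_le_rpow_of_exponent_le one_le_two
                have := ke_nonneg hγ1 (hp i)
                rw [he] at heneg ⊢; linarith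
            _ = 2 := Real.rpow_one 2
        calc (A ^ 2) ^ e = 2 ^ (-e) * (2 ^ e * (A ^ 2) ^ e) := by
              rw [← mul_assoc, ← Real.rpow_add (by norm_num : (0:ℝ) < 2)]
              norm_num
          _ = 2 ^ (-e) * (2 * A ^ 2) ^ e := by rw [h2]
          _ ≤ 2 ^ (-e) * (|a i| ^ (2 * α)) ^ e :=
              mul_le_mul_of_nonneg_left h1 h2negpos.le
          _ ≤ 2 * max (C₀ ^ (ke γ pn - 1)) 1 * (|a i| ^ (2 * α)) ^ e := by
              apply mul_le_mul_of_nonneg_right _ (Real.rpow_nonneg (by positivity) e)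
              calc (2:ℝ) ^ (-e) ≤ 2 := hle2
                _ ≤ 2 * max (C₀ ^ (ke γ pn - 1)) 1 := by linarith
    have hfrac_nonneg : 0 ≤ A ^ (2 * e) / |a i| ^ (2 * α * e) :=
      div_nonneg (Real.rpow_nonneg hApos.le _) (Real.rpow_nonneg hb.le _)
    calc (1 / α ^ 2) * (A ^ (2 * e) / |a i| ^ (2 * α * e))
        ≤ 1 * (A ^ (2 * e) / |a i| ^ (2 * α * e)) := by
          apply mul_le_mul_of_nonneg_right _ hfrac_nonneg
          have hαp := hαpos i
          have h1α := hα1 i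
          rw [div_le_one (by positivity)]
          nlinarith
      _ = A ^ (2 * e) / |a i| ^ (2 * α * e) := one_mul _
      _ ≤ 2 * max (C₀ ^ (ke γ pn - 1)) 1 := hXY
  calc (∑ i ∈ I, (1 / αe γ (p i) ^ 2) *
        (A ^ (2 * (ke γ (p i) - 1)) / |a i| ^ (2 * αe γ (p i) * (ke γ (p i) - 1))))
      ≤ I.card • (2 * max (C₀ ^ (ke γ pn - 1)) 1) := Finset.sum_le_card_nsmul I _ _ hbnd
    _ = (I.card : ℝ) * (2 * max (C₀ ^ (ke γ pn - 1)) 1) := by rw [nsmul_eq_mul]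
    _ ≤ (n : ℝ) * (2 * max (C₀ ^ (ke γ pn - 1)) 1) := by
        apply mul_le_mul_of_nonneg_right _ (by linarith)
        exact_mod_cast (Finset.card_le_card (Finset.subset_univ I)).trans_eq
          (by simp)
    _ = 2 * n * max (C₀ ^ (ke γ pn - 1)) 1 := by ring
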